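/- arXiv:1408.2706 — 2 statements merged into one kernel-verified Lean document; each statement's English description precedes it below -/
import Mathlib

section
/- For every (2k)×(2k) real matrix h with trace zero (k ≥ 1), the sum of squares of the off-diagonal entries satisfies ∑_{i≠j} h_ij² ≥ 2·σ₂(h), where σ₂(h) = ∑_{i<j} (h_ii·h_jj − h_ij·h_ji) and ∑_{i≠j} runs over ordered pairs of distinct indices in Fin (2k). -/
open Finset

lemma swap_Iio_sum {n : ℕ} (g : Fin n → Fin n → ℝ) :
    ∑ i : Fin n, ∑ j ∈ Finset.Iio i, g i j = ∑ j : Fin n, ∑ i ∈ Finset.Ioi j, g i j := by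
  refine Finset.sum_comm' ?_
  intro x y
  simp [Finset.mem_Iio, Finset.mem_Ioi]

lemma offdiag_to_Ioi {n : ℕ} (g : Fin n → Fin n → ℝ) :
    ∑ i : Fin n, ∑ j ∈ ({i}ᶜ : Finset (Fin n)), g i j
      = ∑ i : Fin n, ∑ j ∈ Finset.Ioi i, (g i j + g j i) := by
  have hcompl : ∀ i : Fin n, ({i}ᶜ : Finset (Fin n)) = Finset.Iio i ∪ Finset.Ioi i := by
    intro i; ext j; simp [lt_or_lt_iff_ne, ne_comm, eq_comm]
  have hdisj : ∀ i : Fin n, Disjoint (Finset.Iio i) (Finset.Ioi i) := by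
    intro i
    exact Finset.disjoint_left.2 (by intro a ha hb; simp at ha hb; exact absurd (ha.trans hb) (lt_irrefl a))
  calc ∑ i : Fin n, ∑ j ∈ ({i}ᶜ : Finset (Fin n)), g i j
      = ∑ i : Fin n, (∑ j ∈ Finset.Iio i, g i j + ∑ j ∈ Finset.Ioi i, g i j) := by
        refine Finset.sum_congr rfl fun i _ => ?_
        rw [hcompl i, Finset.sum_union (hdisj i)]
    _ = ∑ i : Fin n, ∑ j ∈ Finset.Iio i, g i j + ∑ i : Fin n, ∑ j ∈ Finset.Ioi i, g i j := by
        rw [Finset.sum_add_distrib]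
    _ = ∑ i : Fin n, ∑ j ∈ Finset.Ioi i, g j i + ∑ i : Fin n, ∑ j ∈ Finset.Ioi i, g i j := by
        rw [swap_Iio_sum]
    _ = ∑ i : Fin n, ∑ j ∈ Finset.Ioi i, (g i j + g j i) := by
        rw [← Finset.sum_add_distrib]
        refine Finset.sum_congr rfl fun i _ => ?_
        rw [← Finset.sum_add_distrib]
        exact Finset.sum_congr rfl fun j _ => by ring

theorem sum_offdiag_sq_ge_two_sigma2 (k : ℕ) (hk : 1 ≤ k)
    (h : Matrix (Fin (2 * k)) (Fin (2 * k)) ℝ)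
    (htr : ∑ i : Fin (2 * k), h i i = 0) :
    ∑ i : Fin (2 * k), ∑ j ∈ ({i}ᶜ : Finset (Fin (2 * k))), h i j ^ 2 ≥
      2 * ∑ i : Fin (2 * k), ∑ j ∈ Finset.Ioi i, (h i i * h j j - h i j * h j i) := by

  -- diagonal products identity from trace zero
  have hdiag : ∑ i : Fin (2 * k), ∑ j ∈ ({i}ᶜ : Finset (Fin (2 * k))), h i i * h j j
      = - ∑ i : Fin (2 * k), (h i i) ^ 2 := by
    have h0 : (∑ i : Fin (2 * k), h i i) * (∑ j : Fin (2 * k), h j j) = 0 := by rw [htr]; ring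
    rw [Finset.sum_mul_sum] at h0
    have hsplit : ∀ i : Fin (2 * k), ∑ j : Fin (2 * k), h i i * h j j
        = h i i ^ 2 + ∑ j ∈ ({i}ᶜ : Finset (Fin (2 * k))), h i i * h j j := by
      intro i
      rw [Finset.compl_singleton, ← Finset.add_sum_erase _ _ (Finset.mem_univ i)]
      ring_nf
    rw [Finset.sum_congr rfl fun i _ => hsplit i, Finset.sum_add_distrib] at h0
    linarith
  have h1 : ∑ i : Fin (2 * k), ∑ j ∈ Finset.Ioi i, (h i i * h j j + h j j * h i i)
      = - ∑ i : Fin (2 * k), (h i i) ^ 2 := by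
    rw [← offdiag_to_Ioi (fun i j => h i i * h j j), hdiag]
  have h2 : ∑ i : Fin (2 * k), ∑ j ∈ ({i}ᶜ : Finset (Fin (2 * k))), h i j ^ 2
      = ∑ i : Fin (2 * k), ∑ j ∈ Finset.Ioi i, (h i j ^ 2 + h j i ^ 2) :=
    offdiag_to_Ioi (fun i j => h i j ^ 2)
  -- nonnegativity pieces
  have h3 : 0 ≤ ∑ i : Fin (2 * k), ∑ j ∈ Finset.Ioi i, (h i j + h j i) ^ 2 :=
    Finset.sum_nonneg fun i _ => Finset.sum_nonneg fun j _ => sq_nonneg _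
  have h4 : 0 ≤ ∑ i : Fin (2 * k), (h i i) ^ 2 := Finset.sum_nonneg fun i _ => sq_nonneg _
  have expand : ∑ i : Fin (2 * k), ∑ j ∈ Finset.Ioi i, (h i j + h j i) ^ 2
      = ∑ i : Fin (2 * k), ∑ j ∈ Finset.Ioi i, (h i j ^ 2 + h j i ^ 2)
        + 2 * ∑ i : Fin (2 * k), ∑ j ∈ Finset.Ioi i, h i j * h j i := by
    rw [Finset.mul_sum, ← Finset.sum_add_distrib]
    refine Finset.sum_congr rfl fun i _ => ?_
    rw [Finset.mul_sum, ← Finset.sum_add_distrib]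
    exact Finset.sum_congr rfl fun j _ => by ring
  have hsub : ∑ i : Fin (2 * k), ∑ j ∈ Finset.Ioi i, (h i i * h j j - h i j * h j i)
      = ∑ i : Fin (2 * k), ∑ j ∈ Finset.Ioi i, h i i * h j j
        - ∑ i : Fin (2 * k), ∑ j ∈ Finset.Ioi i, h i j * h j i := by
    rw [← Finset.sum_sub_distrib]
    exact Finset.sum_congr rfl fun i _ => by rw [← Finset.sum_sub_distrib]
  have h1' : 2 * ∑ i : Fin (2 * k), ∑ j ∈ Finset.Ioi i, h i i * h j j
      = - ∑ i : Fin (2 * k), (h i i) ^ 2 := by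
    rw [← h1, Finset.mul_sum]
    refine Finset.sum_congr rfl fun i _ => ?_
    rw [Finset.mul_sum]
    exact Finset.sum_congr rfl fun j _ => by ring
  rw [ge_iff_le, h2, hsub]
  nlinarith [h3, h4, expand, h1']
end

section
/- For every (2k)×(2k) real matrix h with trace zero (k ≥ 1), the sum of squares of all entries satisfies ∑_{i,j} h_ij² ≥ 2·σ₂(h), where σ₂(h) = ∑_{i<j} (h_ii·h_jj − h_ij·h_ji). -/
/-!
Since the summand of `σ₂` is symmetric in `i, j` and vanishes on the diagonal,
`2 σ₂(h) = (tr h)² - tr(h²)`, which is `-∑ h_ij h_ji` when `tr h = 0`.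
Then `∑ h_ij² + ∑ h_ij h_ji = ½ ∑ (h_ij + h_ji)² ≥ 0`.
-/

open Finset

namespace Matrix

variable {ι R : Type*} [Fintype ι]

theorem neg_trace_mul_self_le_sum_sq [CommRing R] [LinearOrder R] [IsStrictOrderedRing R]
    (A : Matrix ι ι R) : -(A * A).trace ≤ ∑ i, ∑ j, A i j ^ 2 := by
  have hsq_nonneg : 0 ≤ ∑ i, ∑ j, (A i j + A j i) ^ 2 := by positivity
  have htranspose : ∑ i, ∑ j, A j i ^ 2 = ∑ i, ∑ j, A i j ^ 2 := sum_comm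
  have hexpand : ∑ i, ∑ j, (A i j + A j i) ^ 2
      = ∑ i, ∑ j, A i j ^ 2 + ∑ i, ∑ j, A j i ^ 2 + 2 * (A * A).trace := by
    simp only [add_sq, sum_add_distrib, trace, diag, mul_apply, mul_sum, mul_assoc]
    ring
  linarith

variable [LinearOrder ι] [LocallyFiniteOrderTop ι] [LocallyFiniteOrderBot ι]

def sigma2 [CommRing R] (A : Matrix ι ι R) : R :=
  ∑ i, ∑ j ∈ Ioi i, (A i i * A j j - A i j * A j i)

theorem two_mul_sigma2 [CommRing R] (A : Matrix ι ι R) :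
    2 * A.sigma2 = A.trace ^ 2 - (A * A).trace := by
  set g : ι → ι → R := fun i j => A i i * A j j - A i j * A j i
  have hpairs : 2 * A.sigma2 = ∑ i, ∑ j ∈ Ioi i, (g j i + g i j) := by
    simp only [sigma2, mul_sum, g]
    exact sum_congr rfl fun i _ => sum_congr rfl fun j _ => by ring
  have hoff_diag (i : ι) : ∑ j ∈ {i}ᶜ, g j i = ∑ j, g j i := by
    rw [← sum_compl_add_sum {i}, sum_singleton]
    simp [g, mul_comm]
  have hfull : ∑ i, ∑ j, g j i = A.trace ^ 2 - (A * A).trace := by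
    simp only [g, trace, diag, mul_apply, sq, sum_mul_sum, ← sum_sub_distrib]
    exact sum_congr rfl fun i _ => sum_congr rfl fun j _ => by ring
  rw [hpairs, sum_sum_Ioi_add_eq_sum_sum_off_diag, sum_congr rfl fun i _ => hoff_diag i, hfull]

end Matrix

theorem sum_sq_ge_two_sigma2_general (k : ℕ)
    (h : Matrix (Fin (2 * k)) (Fin (2 * k)) ℝ)
    (htr : ∑ i : Fin (2 * k), h i i = 0) :
    ∑ i : Fin (2 * k), ∑ j : Fin (2 * k), h i j ^ 2 ≥
      2 * ∑ i : Fin (2 * k), ∑ j ∈ Finset.Ioi i, (h i i * h j j - h i j * h j i) := by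
  change _ ≥ 2 * h.sigma2
  rw [ge_iff_le, h.two_mul_sigma2, show h.trace = 0 from htr, sq, zero_mul, zero_sub]
  exact h.neg_trace_mul_self_le_sum_sq

theorem sum_sq_ge_two_sigma2 (k : ℕ) (hk : 1 ≤ k)
    (h : Matrix (Fin (2 * k)) (Fin (2 * k)) ℝ)
    (htr : ∑ i : Fin (2 * k), h i i = 0) :
    ∑ i : Fin (2 * k), ∑ j : Fin (2 * k), h i j ^ 2 ≥
      2 * ∑ i : Fin (2 * k), ∑ j ∈ Finset.Ioi i, (h i i * h j j - h i j * h j i) :=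
  sum_sq_ge_two_sigma2_general k h htr
end
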